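/- In the binary necklace graph NG(4), there is no Hamiltonian path; more precisely, the longest path in NG(4) contains exactly 5 of its 6 vertices. -/

import Mathlib

/-- Two binary strings of length `n` are rotation-equivalent. -/
def necklaceRel (n : ℕ) (f g : Fin n → Bool) : Prop :=
  ∃ k : ℕ, g = f ∘ ⇑((finRotate n) ^ k)

/-- De Bruijn arc: `g i = f (i+1)` for all `i < n - 1`. -/
def dBArc (n : ℕ) (f g : Fin n → Bool) : Prop :=
  ∀ i : Fin n, (h : i.val + 1 < n) → g i = f ⟨i.val + 1, h⟩

/-- The necklace graph on rotation classes of binary strings of length `n`. -/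
def NG (n : ℕ) : SimpleGraph (Quot (necklaceRel n)) where
  Adj X Y := X ≠ Y ∧ ∃ f g : Fin n → Bool,
    Quot.mk _ f = X ∧ Quot.mk _ g = Y ∧ (dBArc n f g ∨ dBArc n g f)
  symm := by
    constructor
    rintro X Y ⟨hne, f, g, hf, hg, h⟩
    exact ⟨hne.symm, g, f, hg, hf, h.symm⟩
  loopless := by constructor; rintro X ⟨hne, -⟩; exact hne rfl

/-!
NG(4) is the 4-cycle 0001 – 0011 – 0111 – 0101 with a pendant vertex 0000 at 0001 and a pendant
vertex 1111 at 0111. A Hamiltonian path has to end at both pendant vertices, so between 0001 and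
0111 it must pass through both 0011 and 0101, which are not adjacent. Once NG(4) is identified with
this explicit graph on `Fin 6`, it suffices to check the 720 orderings of its vertices.
-/

open Fin.NatCast in
theorem finRotate_pow_apply {n : ℕ} [NeZero n] (k : ℕ) (i : Fin n) :
    (finRotate n ^ k) i = i + (k : Fin n) := by
  induction k with
  | zero => simp
  | succ k ih => rw [pow_succ', Equiv.Perm.mul_apply, ih, finRotate_apply, Nat.cast_succ, add_assoc]

open Fin.NatCast in
theorem finRotate_pow_self (n : ℕ) [NeZero n] : finRotate n ^ n = 1 := by
  ext i
  simp [finRotate_pow_apply]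

section Necklace

variable {n : ℕ}

theorem necklaceRel_equivalence : Equivalence (necklaceRel n) where
  refl f := ⟨0, by simp⟩
  symm := by
    rintro f g ⟨k, rfl⟩
    obtain ⟨m, hm⟩ := (isOfFinOrder_of_finite (finRotate n)).mem_powers_iff_mem_zpowers.2
      (⟨-k, by simp⟩ : (finRotate n ^ k)⁻¹ ∈ Subgroup.zpowers (finRotate n))
    refine ⟨m, ?_⟩
    rw [show finRotate n ^ m = _ from hm, Function.comp_assoc, ← Equiv.Perm.coe_mul,
      mul_inv_cancel, Equiv.Perm.coe_one, Function.comp_id]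
  trans := by
    rintro f g h ⟨k, rfl⟩ ⟨j, rfl⟩
    exact ⟨k + j, by rw [pow_add, Equiv.Perm.coe_mul, Function.comp_assoc]⟩

theorem necklaceRel_iff_exists_fin [NeZero n] {f g : Fin n → Bool} :
    necklaceRel n f g ↔ ∃ k : Fin n, g = f ∘ ⇑(finRotate n ^ (k : ℕ)) :=
  ⟨fun ⟨k, hk⟩ => ⟨⟨k % n, Nat.mod_lt _ (NeZero.pos n)⟩, by
    rwa [← pow_eq_pow_mod k (finRotate_pow_self n)]⟩, fun ⟨k, hk⟩ => ⟨k, hk⟩⟩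

instance [NeZero n] : DecidableRel (necklaceRel n) := fun _ _ =>
  decidable_of_iff _ necklaceRel_iff_exists_fin.symm

instance [NeZero n] : DecidableEq (Quot (necklaceRel n)) := fun X Y =>
  Quot.recOnSubsingleton₂ X Y fun f g =>
    decidable_of_iff _ (necklaceRel_equivalence.quot_mk_eq_iff f g).symm

instance [NeZero n] : Fintype (Quot (necklaceRel n)) :=
  Fintype.ofSurjective _ Quot.mk_surjective

instance : DecidableRel (dBArc n) := fun _ _ => by unfold dBArc; infer_instance

instance [NeZero n] : DecidableRel (NG n).Adj := fun X Y =>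
  inferInstanceAs (Decidable (X ≠ Y ∧ _))

end Necklace

namespace SimpleGraph.Walk

variable {α : Type*} [DecidableEq α] {G : SimpleGraph α} {a b : α} {p : G.Walk a b}

theorem IsHamiltonian.support_perm (hp : p.IsHamiltonian) {l : List α} (hl : l.Nodup)
    (hmem : ∀ x, x ∈ l) : p.support.Perm l :=
  (List.perm_ext_iff_of_nodup hp.isPath.support_nodup hl).2 fun x => by simp [hp.mem_support, hmem]

theorem IsPath.length_support_lt_card [Fintype α] (hp : p.IsPath) (hH : ¬ p.IsHamiltonian) :
    p.support.length < Fintype.card α := by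
  have hle := hp.support_nodup.length_le_card
  have hne : p.length ≠ Fintype.card α - 1 := fun h =>
    hH (isHamiltonian_iff_isPath_and_length_eq.2 ⟨hp, h⟩)
  rw [length_support] at hle ⊢
  omega

end SimpleGraph.Walk

open SimpleGraph

def necklace4 : Fin 6 → Quot (necklaceRel 4) := fun i => Quot.mk _ <|
  ![![false, false, false, false], ![false, false, false, true], ![false, false, true, true],
    ![false, true, false, true], ![false, true, true, true], ![true, true, true, true]] i

def necklaceGraph4 : SimpleGraph (Fin 6) :=
  fromEdgeSet ({s(0, 1), s(1, 2), s(1, 3), s(2, 4), s(3, 4), s(4, 5)} : Finset (Sym2 (Fin 6)))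

instance : DecidableRel necklaceGraph4.Adj := fun i j =>
  inferInstanceAs (Decidable (s(i, j) ∈ (_ : Finset (Sym2 (Fin 6))) ∧ i ≠ j))

theorem necklace4_bijective : Function.Bijective necklace4 := by
  refine ⟨by decide, Quot.ind ?_⟩
  decide

theorem NG4_adj_necklace4_iff :
    ∀ i j, (NG 4).Adj (necklace4 i) (necklace4 j) ↔ necklaceGraph4.Adj i j := by
  decide

noncomputable def necklaceGraph4Iso : necklaceGraph4 ≃g NG 4 where
  toEquiv := Equiv.ofBijective _ necklace4_bijective
  map_rel_iff' := NG4_adj_necklace4_iff _ _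

set_option maxRecDepth 10000 in
theorem necklaceGraph4_not_isChain_of_perm :
    ∀ l ∈ (List.finRange 6).permutations', ¬ l.IsChain necklaceGraph4.Adj := by
  decide

theorem necklaceGraph4_walk_not_isHamiltonian {a b : Fin 6} (p : necklaceGraph4.Walk a b) :
    ¬ p.IsHamiltonian := fun hp =>
  necklaceGraph4_not_isChain_of_perm p.support
    (List.mem_permutations'.2 (hp.support_perm (List.nodup_finRange 6) List.mem_finRange))
    p.isChain_adj_support

theorem NG4_walk_not_isHamiltonian {u v : Quot (necklaceRel 4)} (p : (NG 4).Walk u v) :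
    ¬ p.IsHamiltonian := fun hp =>
  necklaceGraph4_walk_not_isHamiltonian (p.map necklaceGraph4Iso.symm.toHom)
    (hp.map _ necklaceGraph4Iso.symm.bijective)

theorem NG4_card_vertices : Fintype.card (Quot (necklaceRel 4)) = 6 := by
  rw [← Fintype.card_congr necklaceGraph4Iso.toEquiv, Fintype.card_fin]

theorem necklaceGraph4_exists_isPath_length_support_eq_five :
    ∃ (i j : Fin 6) (p : necklaceGraph4.Walk i j), p.IsPath ∧ p.support.length = 5 :=
  ⟨0, 5, .cons (by decide : necklaceGraph4.Adj 0 1) <|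
    .cons (by decide : necklaceGraph4.Adj 1 2) <|
    .cons (by decide : necklaceGraph4.Adj 2 4) <|
    .cons (by decide : necklaceGraph4.Adj 4 5) .nil,
    by rw [Walk.isPath_def]; decide, rfl⟩

theorem NG4_no_hamiltonian_path :
    (¬ ∃ (u v : Quot (necklaceRel 4)) (p : (NG 4).Walk u v),
        p.IsPath ∧ ∀ X : Quot (necklaceRel 4), X ∈ p.support) ∧
    (∀ (u v : Quot (necklaceRel 4)) (p : (NG 4).Walk u v),
        p.IsPath → p.support.length ≤ 5) ∧
    (∃ (u v : Quot (necklaceRel 4)) (p : (NG 4).Walk u v),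
        p.IsPath ∧ p.support.length = 5) := by
  refine ⟨?_, ?_, ?_⟩
  · rintro ⟨u, v, p, hp, hmem⟩
    exact NG4_walk_not_isHamiltonian p (hp.isHamiltonian_of_mem hmem)
  · intro u v p hp
    have hlt := hp.length_support_lt_card (NG4_walk_not_isHamiltonian p)
    rw [NG4_card_vertices] at hlt
    omega
  · obtain ⟨i, j, p, hp, hlen⟩ := necklaceGraph4_exists_isPath_length_support_eq_five
    refine ⟨_, _, p.map necklaceGraph4Iso.toHom, hp.map necklaceGraph4Iso.injective, ?_⟩
    rw [Walk.support_map, List.length_map, hlen]
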